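/- Let E be a complex inner product space and K : E → E an antiunitary map with K ∘ K = −id. Then every finite-dimensional ℂ-linear subspace W of E with K(W) ⊆ W has even complex dimension. -/

import Mathlib

/-! Multiplication by `i` and the conjugate-linear `K` anticommute and both square to `-1`, so
together they make `W` a module over the quaternions `ℍ`. Counting real dimensions,
`2 · dim_ℂ W = dim_ℝ W = 4 · dim_ℍ W`. -/

open Module Quaternion

theorem even_finrank_complex_of_module_quaternion (V : Type*) [AddCommGroup V] [Module ℝ V]
    [Module ℂ V] [IsScalarTower ℝ ℂ V] [Module ℍ[ℝ] V] [IsScalarTower ℝ ℍ[ℝ] V] :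
    Even (finrank ℂ V) := by
  have hH := finrank_mul_finrank ℝ ℍ[ℝ] V
  have hC := finrank_mul_finrank ℝ ℂ V
  rw [Quaternion.finrank_eq_four] at hH
  rw [Complex.finrank_real_complex] at hC
  exact ⟨finrank ℍ[ℝ] V, by omega⟩

section QuaternionicStructure

variable {V : Type*} [AddCommGroup V] [Module ℂ V] [Module ℝ V] [IsScalarTower ℝ ℂ V]

def LinearMap.conjRestrictScalars (J : V →ₗ⋆[ℂ] V) : V →ₗ[ℝ] V where
  toFun := J
  map_add' := J.map_add
  map_smul' r x := by
    rw [← algebraMap_smul ℂ r x, J.map_smulₛₗ, Complex.coe_algebraMap, Complex.conj_ofReal,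
      ← Complex.coe_algebraMap, algebraMap_smul]
    rfl

noncomputable def quaternionicStructureBasis (J : V →ₗ⋆[ℂ] V) (hJ : ∀ x, J (J x) = -x) :
    QuaternionAlgebra.Basis (Module.End ℝ V) (-1 : ℝ) 0 (-1) where
  i := Algebra.lsmul ℝ ℝ V Complex.I
  j := J.conjRestrictScalars
  k := Algebra.lsmul ℝ ℝ V Complex.I * J.conjRestrictScalars
  i_mul_i := by
    rw [← map_mul, Complex.I_mul_I, zero_smul, add_zero, map_neg, map_one, neg_one_smul]
  j_mul_j := by ext x; simp [LinearMap.conjRestrictScalars, hJ]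
  i_mul_j := rfl
  j_mul_i := by ext x; simp [LinearMap.conjRestrictScalars]

theorem even_finrank_complex_of_quaternionic_structure (J : V →ₗ⋆[ℂ] V)
    (hJ : ∀ x, J (J x) = -x) : Even (finrank ℂ V) := by
  let φ : ℍ[ℝ] →ₐ[ℝ] Module.End ℝ V := (quaternionicStructureBasis J hJ).liftHom
  let _ : Module ℍ[ℝ] V := Module.compHom V φ.toRingHom
  have : IsScalarTower ℝ ℍ[ℝ] V := ⟨fun r q x => by
    show φ (r • q) x = r • φ q x
    rw [map_smul]; rfl⟩
  exact even_finrank_complex_of_module_quaternion V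

end QuaternionicStructure

theorem antiunitary_invariant_subspace_even_dim_general
    {E : Type*} [NormedAddCommGroup E] [InnerProductSpace ℂ E] (K : E → E)
    (hadd : ∀ x y : E, K (x + y) = K x + K y)
    (hsmul : ∀ (c : ℂ) (x : E), K (c • x) = (starRingEnd ℂ c) • K x)
    (hKK : ∀ x : E, K (K x) = -x)
    (W : Submodule ℂ E) (hW : ∀ x ∈ W, K x ∈ W) :
    Even (Module.finrank ℂ W) := by
  let J : W →ₗ⋆[ℂ] W :=
    { toFun := fun x => ⟨K x, hW x x.2⟩
      map_add' := fun x y => Subtype.ext (hadd x y)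
      map_smul' := fun c x => Subtype.ext (hsmul c x) }
  exact even_finrank_complex_of_quaternionic_structure J fun x => Subtype.ext (hKK x)

/-- If `K` is an antiunitary map on a complex inner product space with `K ∘ K = -id`,
then every finite-dimensional `ℂ`-linear subspace invariant under `K` has even complex
dimension. -/
theorem antiunitary_invariant_subspace_even_dim
    {E : Type*} [NormedAddCommGroup E] [InnerProductSpace ℂ E] (K : E → E)
    (hadd : ∀ x y : E, K (x + y) = K x + K y)
    (hsmul : ∀ (c : ℂ) (x : E), K (c • x) = (starRingEnd ℂ c) • K x)
    (hinner : ∀ x y : E, (inner ℂ (K x) (K y) : ℂ) = inner ℂ y x)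
    (hKK : ∀ x : E, K (K x) = -x)
    (W : Submodule ℂ E) (hWfin : FiniteDimensional ℂ W) (hW : ∀ x ∈ W, K x ∈ W) :
    Even (Module.finrank ℂ W) :=
  antiunitary_invariant_subspace_even_dim_general K hadd hsmul hKK W hW
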